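/- arXiv:2605.00709 — 2 statements merged into one kernel-verified Lean document; each statement's English description precedes it below -/
import Mathlib

section
/- Let (Ω, F, P) be a probability space, G ⊆ F a sub-σ-algebra, and s an integrable random variable. Define a = E[s | A] − E[s], d = E[s | B] − E[s], v = E[s | A ∨ B] − E[s | A] − E[s | B] + E[s], and e = s − E[s | A ∨ B], where A, B ⊆ F are sub-σ-algebras. Then s = a + d + v + e + E[s], E[e | A ∨ B] = 0, and E[v | A] = 0 and E[v | B] = 0 whenever A and B are independent. -/
/-! The decomposition identity is algebra, and `E[e | A ⊔ B] = 0` is the projection property of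
conditional expectation. For the interaction term `v`, the tower property gives
`E[E[s | A ⊔ B] | A] = E[s | A]`, while independence of `A` and `B` makes `E[E[s | B] | A]`
the constant `E[s]`; hence `E[v | A] = E[s | A] - E[s | A] - E[s] + E[s] = 0`, and symmetrically
for `B`. -/

open MeasureTheory ProbabilityTheory Filter

section

variable {Ω E : Type*} {mΩ : MeasurableSpace Ω} {μ : Measure Ω}
  [NormedAddCommGroup E] [NormedSpace ℝ E]

noncomputable def hoeffdingInteraction (μ : Measure Ω) (A B : MeasurableSpace Ω) (s : Ω → E) :
    Ω → E :=
  μ[s|A ⊔ B] - μ[s|A] - μ[s|B] + fun _ => ∫ x, s x ∂μ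

lemma hoeffdingInteraction_comm (A B : MeasurableSpace Ω) (s : Ω → E) :
    hoeffdingInteraction μ A B s = hoeffdingInteraction μ B A s := by
  rw [hoeffdingInteraction, hoeffdingInteraction, sup_comm A B]
  abel

variable [CompleteSpace E]

lemma condExp_sub_condExp_self_ae_eq_zero {m : MeasurableSpace Ω} (hm : m ≤ mΩ)
    [SigmaFinite (μ.trim hm)] {f : Ω → E} (hf : Integrable f μ) :
    μ[f - μ[f|m]|m] =ᵐ[μ] 0 := by
  have hproj : μ[μ[f|m]|m] = μ[f|m] :=
    condExp_of_stronglyMeasurable hm stronglyMeasurable_condExp integrable_condExp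
  filter_upwards [condExp_sub hf (integrable_condExp (m := m) (f := f)) m] with ω hω
  simp [hω, hproj]

lemma condExp_condExp_ae_eq_integral_of_indep [IsProbabilityMeasure μ]
    {m₁ m₂ : MeasurableSpace Ω} (h₁ : m₁ ≤ mΩ) (h₂ : m₂ ≤ mΩ) (hind : Indep m₁ m₂ μ)
    (f : Ω → E) :
    μ[μ[f|m₁]|m₂] =ᵐ[μ] fun _ => ∫ x, f x ∂μ := by
  rw [← integral_condExp h₁]
  exact condExp_indep_eq h₁ h₂ stronglyMeasurable_condExp hind

variable {A B : MeasurableSpace Ω}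

lemma condExp_hoeffdingInteraction_left_ae_eq_zero [IsProbabilityMeasure μ]
    (hA : A ≤ mΩ) (hB : B ≤ mΩ) (hind : Indep A B μ) (s : Ω → E) :
    μ[hoeffdingInteraction μ A B s|A] =ᵐ[μ] 0 := by
  have hlin : μ[hoeffdingInteraction μ A B s|A] =ᵐ[μ]
      μ[μ[s|A ⊔ B]|A] - μ[μ[s|A]|A] - μ[μ[s|B]|A] + μ[fun _ => ∫ x, s x ∂μ|A] :=
    (condExp_add ((integrable_condExp.sub integrable_condExp).sub integrable_condExp)
      (integrable_const _) A).trans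
      (((condExp_sub (integrable_condExp.sub integrable_condExp) integrable_condExp A).trans
        ((condExp_sub integrable_condExp integrable_condExp A).sub EventuallyEq.rfl)).add
        EventuallyEq.rfl)
  have hproj : μ[μ[s|A]|A] = μ[s|A] :=
    condExp_of_stronglyMeasurable hA stronglyMeasurable_condExp integrable_condExp
  filter_upwards [hlin, condExp_condExp_of_le (f := s) le_sup_left (sup_le hA hB),
    condExp_condExp_ae_eq_integral_of_indep hB hA hind.symm s] with ω hω hAB hBA
  simp [hω, hAB, hBA, hproj, condExp_const hA]

lemma condExp_hoeffdingInteraction_right_ae_eq_zero [IsProbabilityMeasure μ]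
    (hA : A ≤ mΩ) (hB : B ≤ mΩ) (hind : Indep A B μ) (s : Ω → E) :
    μ[hoeffdingInteraction μ A B s|B] =ᵐ[μ] 0 := by
  rw [hoeffdingInteraction_comm]
  exact condExp_hoeffdingInteraction_left_ae_eq_zero hB hA hind.symm s

end

/-- Hoeffding-type decomposition of an integrable (square-integrable) random
variable `s` with respect to two sub-σ-algebras `A` and `B`:
with `a = E[s|A] − E[s]`, `d = E[s|B] − E[s]`,
`v = E[s|A ⊔ B] − E[s|A] − E[s|B] + E[s]`, and `e = s − E[s|A ⊔ B]`, we have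
`s = a + d + v + e + E[s]`, `E[e | A ⊔ B] = 0` a.s., and if `A` and `B` are
independent then `E[v|A] = 0` and `E[v|B] = 0` a.s. -/
theorem hoeffding_decomposition
    {Ω : Type*} {mΩ : MeasurableSpace Ω} (μ : Measure Ω) [IsProbabilityMeasure μ]
    (A B : MeasurableSpace Ω) (hA : A ≤ mΩ) (hB : B ≤ mΩ)
    (s : Ω → ℝ) (hs : MemLp s 2 μ) :
    (∀ ω, s ω =
        ((μ[s|A]) ω - ∫ x, s x ∂μ) + ((μ[s|B]) ω - ∫ x, s x ∂μ)
        + ((μ[s|A ⊔ B]) ω - (μ[s|A]) ω - (μ[s|B]) ω + ∫ x, s x ∂μ)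
        + (s ω - (μ[s|A ⊔ B]) ω) + ∫ x, s x ∂μ)
    ∧ μ[(fun ω => s ω - (μ[s|A ⊔ B]) ω)|A ⊔ B] =ᵐ[μ] 0
    ∧ (ProbabilityTheory.Indep A B μ →
        μ[(fun ω => (μ[s|A ⊔ B]) ω - (μ[s|A]) ω - (μ[s|B]) ω + ∫ x, s x ∂μ)|A]
            =ᵐ[μ] 0
        ∧ μ[(fun ω => (μ[s|A ⊔ B]) ω - (μ[s|A]) ω - (μ[s|B]) ω + ∫ x, s x ∂μ)|B]
            =ᵐ[μ] 0) :=
  ⟨fun ω => by ring,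
    condExp_sub_condExp_self_ae_eq_zero (sup_le hA hB) (hs.integrable one_le_two),
    fun hind => ⟨condExp_hoeffdingInteraction_left_ae_eq_zero hA hB hind s,
      condExp_hoeffdingInteraction_right_ae_eq_zero hA hB hind s⟩⟩
end

section
/- With the same array {ε_{it}} as above, the probability of the event A_{NT} = {ε_{it} = 0 for all i ≤ N, t ≤ T} equals (1 − 1/(NT))^{NT}, and this converges to e^{−1} as NT → ∞. Consequently, for two such arrays with parameters m₁ ≠ m₂, the total variation distance between the induced joint laws satisfies limsup ‖P_{m₁,NT} − P_{m₂,NT}‖_TV ≤ 1 − e^{−1} < 1. -/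
/-!
By independence, each array vanishes identically with probability `(1 - 1/n)^n`, so both joint
laws put exactly this mass on the atom `0`. Two probability measures that agree on a set `A`
are at total variation distance at most `1 - P A`, since they can only differ through their
mass outside `A`; hence the distance is at most `1 - (1 - 1/n)^n → 1 - e⁻¹`.
-/

open Filter Topology MeasureTheory ProbabilityTheory

/-- Total variation distance `sup_A |P(A) − Q(A)|` over measurable sets. -/
noncomputable def tvDist {Ω : Type*} [MeasurableSpace Ω] (P Q : Measure Ω) : ℝ :=
  ⨆ s : {s : Set Ω // MeasurableSet s}, |(P s).toReal - (Q s).toReal|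

open scoped ENNReal

section TotalVariation

variable {X : Type*} [MeasurableSpace X] {P Q : Measure X}

lemma tvDist_nonneg : 0 ≤ tvDist P Q :=
  Real.iSup_nonneg fun _ => abs_nonneg _

lemma tvDist_le_one_sub_of_restrict_eq [IsProbabilityMeasure P] [IsProbabilityMeasure Q]
    {A : Set X} (hA : MeasurableSet A) (h : P.restrict A = Q.restrict A) :
    tvDist P Q ≤ 1 - P.real A := by
  have hmass : Q.real A = P.real A := by
    simpa [measureReal_def] using congrArg (fun ν : Measure X => (ν A).toReal) h.symm
  have : Nonempty {s : Set X // MeasurableSet s} := ⟨⟨∅, .empty⟩⟩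
  refine ciSup_le fun ⟨s, _⟩ => ?_
  have hin : P.real (s ∩ A) = Q.real (s ∩ A) := by
    simpa [measureReal_def, Measure.restrict_apply' hA] using
      congrArg (fun ν : Measure X => (ν s).toReal) h
  have hP := measureReal_inter_add_sdiff (μ := P) (s := s) hA
  have hQ := measureReal_inter_add_sdiff (μ := Q) (s := s) hA
  have hPout : P.real (s \ A) ≤ 1 - P.real A := by
    rw [← probReal_compl_eq_one_sub hA]; exact measureReal_mono (Set.sdiff_subset_compl s A)
  have hQout : Q.real (s \ A) ≤ 1 - P.real A := by
    rw [← hmass, ← probReal_compl_eq_one_sub hA]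
    exact measureReal_mono (Set.sdiff_subset_compl s A)
  rw [← measureReal_def, ← measureReal_def, abs_sub_le_iff]
  constructor <;> linarith [measureReal_nonneg (μ := P) (s := s \ A),
    measureReal_nonneg (μ := Q) (s := s \ A)]

lemma tvDist_le_one_sub_of_measure_singleton_eq [MeasurableSingletonClass X]
    [IsProbabilityMeasure P] [IsProbabilityMeasure Q] {x : X} (h : P {x} = Q {x}) :
    tvDist P Q ≤ 1 - P.real {x} :=
  tvDist_le_one_sub_of_restrict_eq (measurableSet_singleton x) <| by
    rw [Measure.restrict_singleton, Measure.restrict_singleton, h]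

end TotalVariation

section Arrays

variable {Ω ι β : Type*} [MeasurableSpace Ω] [MeasurableSpace β] [MeasurableSingletonClass β]
  {μ : Measure Ω} {ε : ι → Ω → β}

lemma measure_map_pi_singleton [Countable ι] (hε : ∀ i, Measurable (ε i)) (x : ι → β) :
    μ.map (fun ω i => ε i ω) {x} = μ {ω | ∀ i, ε i ω = x i} := by
  rw [Measure.map_apply (measurable_pi_lambda _ hε) (measurableSet_singleton x)]
  congr 1
  ext ω
  simp [funext_iff]

lemma ProbabilityTheory.iIndepFun.measure_forall_eq_const [Fintype ι] (h : iIndepFun ε μ)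
    (x : β) {p : ℝ≥0∞} (hp : ∀ i, μ {ω | ε i ω = x} = p) :
    μ {ω | ∀ i, ε i ω = x} = p ^ Fintype.card ι := by
  have hset : {ω | ∀ i, ε i ω = x} = ⋂ i, ε i ⁻¹' {x} := by
    ext ω; simp
  rw [hset, h.meas_iInter fun i => ⟨{x}, measurableSet_singleton x, rfl⟩]
  simp [Set.preimage, hp]

end Arrays

lemma limsup_le_of_eventually_le_of_tendsto {α : Type*} {f : Filter α} [f.NeBot]
    {u v : α → ℝ} {l : ℝ} (hu : ∀ a, 0 ≤ u a) (huv : u ≤ᶠ[f] v) (hv : Tendsto v f (𝓝 l)) :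
    limsup u f ≤ l :=
  hv.limsup_eq ▸ limsup_le_limsup huv
    (isCoboundedUnder_le_of_eventually_le f (Eventually.of_forall hu)) hv.isBoundedUnder_le

lemma tendsto_one_sub_one_div_pow_exp :
    Tendsto (fun n : ℕ => (1 - 1 / (n : ℝ)) ^ n) atTop (𝓝 (Real.exp (-1))) := by
  simpa [sub_eq_add_neg, neg_div] using Real.tendsto_one_add_div_pow_exp (-1)

theorem all_zero_event_and_tv_bound_general
    (m₁ m₂ : ℝ)
    (Ω : ℕ → Type*) (mΩ : ∀ n, MeasurableSpace (Ω n))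
    (μ : ∀ n, Measure (Ω n)) (hμ : ∀ n, IsProbabilityMeasure (μ n))
    (ε₁ ε₂ : ∀ n, Fin n → Ω n → ℝ)
    (hmeas₁ : ∀ n i, Measurable (ε₁ n i)) (hmeas₂ : ∀ n i, Measurable (ε₂ n i))
    (hindep₁ : ∀ n, iIndepFun (ε₁ n) (μ n))
    (hindep₂ : ∀ n, iIndepFun (ε₂ n) (μ n))
    (hlaw₁ : ∀ n, 1 ≤ n → ∀ i,
      μ n {ω | ε₁ n i ω = m₁} = ENNReal.ofReal (1 / (2 * (n : ℝ)))
      ∧ μ n {ω | ε₁ n i ω = -m₁} = ENNReal.ofReal (1 / (2 * (n : ℝ)))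
      ∧ μ n {ω | ε₁ n i ω = 0} = ENNReal.ofReal (1 - 1 / (n : ℝ)))
    (hlaw₂ : ∀ n, 1 ≤ n → ∀ i,
      μ n {ω | ε₂ n i ω = m₂} = ENNReal.ofReal (1 / (2 * (n : ℝ)))
      ∧ μ n {ω | ε₂ n i ω = -m₂} = ENNReal.ofReal (1 / (2 * (n : ℝ)))
      ∧ μ n {ω | ε₂ n i ω = 0} = ENNReal.ofReal (1 - 1 / (n : ℝ)))
    (P Q : ∀ n : ℕ, Measure (Fin n → ℝ))
    (hP : ∀ n, P n = Measure.map (fun ω i => ε₁ n i ω) (μ n))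
    (hQ : ∀ n, Q n = Measure.map (fun ω i => ε₂ n i ω) (μ n)) :
    (∀ n, 1 ≤ n →
      μ n {ω | ∀ i, ε₁ n i ω = 0} = ENNReal.ofReal ((1 - 1 / (n : ℝ)) ^ n))
    ∧ Tendsto (fun n : ℕ => (1 - 1 / (n : ℝ)) ^ n) atTop (𝓝 (Real.exp (-1)))
    ∧ Filter.limsup (fun n => tvDist (P n) (Q n)) atTop ≤ 1 - Real.exp (-1)
    ∧ 1 - Real.exp (-1) < 1 := by
  have hq : ∀ n : ℕ, 1 ≤ n → 0 ≤ 1 - 1 / (n : ℝ) := fun n hn =>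
    sub_nonneg.2 <| div_le_one_of_le₀ (by exact_mod_cast hn) n.cast_nonneg
  have hzero₁ : ∀ n, 1 ≤ n →
      μ n {ω | ∀ i, ε₁ n i ω = 0} = ENNReal.ofReal ((1 - 1 / (n : ℝ)) ^ n) := fun n hn => by
    rw [(hindep₁ n).measure_forall_eq_const 0 fun i => (hlaw₁ n hn i).2.2,
      Fintype.card_fin, ENNReal.ofReal_pow (hq n hn)]
  have hzero₂ : ∀ n, 1 ≤ n →
      μ n {ω | ∀ i, ε₂ n i ω = 0} = ENNReal.ofReal ((1 - 1 / (n : ℝ)) ^ n) := fun n hn => by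
    rw [(hindep₂ n).measure_forall_eq_const 0 fun i => (hlaw₂ n hn i).2.2,
      Fintype.card_fin, ENNReal.ofReal_pow (hq n hn)]
  have htv : ∀ n, 1 ≤ n → tvDist (P n) (Q n) ≤ 1 - (1 - 1 / (n : ℝ)) ^ n := fun n hn => by
    have hP0 : P n {0} = ENNReal.ofReal ((1 - 1 / (n : ℝ)) ^ n) := by
      rw [hP, measure_map_pi_singleton (hmeas₁ n)]; exact hzero₁ n hn
    have hQ0 : Q n {0} = ENNReal.ofReal ((1 - 1 / (n : ℝ)) ^ n) := by
      rw [hQ, measure_map_pi_singleton (hmeas₂ n)]; exact hzero₂ n hn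
    have : IsProbabilityMeasure (P n) :=
      hP n ▸ Measure.isProbabilityMeasure_map (measurable_pi_lambda _ (hmeas₁ n)).aemeasurable
    have : IsProbabilityMeasure (Q n) :=
      hQ n ▸ Measure.isProbabilityMeasure_map (measurable_pi_lambda _ (hmeas₂ n)).aemeasurable
    calc tvDist (P n) (Q n) ≤ 1 - (P n).real {0} :=
          tvDist_le_one_sub_of_measure_singleton_eq (hP0.trans hQ0.symm)
      _ = 1 - (1 - 1 / (n : ℝ)) ^ n := by
          rw [measureReal_def, hP0, ENNReal.toReal_ofReal (pow_nonneg (hq n hn) n)]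
  refine ⟨hzero₁, tendsto_one_sub_one_div_pow_exp, ?_, by linarith [Real.exp_pos (-1)]⟩
  exact limsup_le_of_eventually_le_of_tendsto (fun _ => tvDist_nonneg)
    (eventually_atTop.2 ⟨1, htv⟩) (tendsto_const_nhds.sub tendsto_one_sub_one_div_pow_exp)

/-- For the sparse i.i.d. arrays `ε₁` (parameter `m₁`) and `ε₂` (parameter
`m₂`): the probability that all entries vanish is `(1 − 1/n)^n → e^{−1}`, and
consequently the total variation distance between the induced joint laws
satisfies `limsup ‖P_{m₁,n} − P_{m₂,n}‖_TV ≤ 1 − e^{−1} < 1`. -/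
theorem all_zero_event_and_tv_bound
    (m₁ m₂ : ℝ) (hm₁ : 0 < m₁) (hm₂ : 0 < m₂) (hne : m₁ ≠ m₂)
    (Ω : ℕ → Type*) (mΩ : ∀ n, MeasurableSpace (Ω n))
    (μ : ∀ n, Measure (Ω n)) (hμ : ∀ n, IsProbabilityMeasure (μ n))
    (ε₁ ε₂ : ∀ n, Fin n → Ω n → ℝ)
    (hmeas₁ : ∀ n i, Measurable (ε₁ n i)) (hmeas₂ : ∀ n i, Measurable (ε₂ n i))
    (hindep₁ : ∀ n, iIndepFun (ε₁ n) (μ n))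
    (hindep₂ : ∀ n, iIndepFun (ε₂ n) (μ n))
    (hlaw₁ : ∀ n, 1 ≤ n → ∀ i,
      μ n {ω | ε₁ n i ω = m₁} = ENNReal.ofReal (1 / (2 * (n : ℝ)))
      ∧ μ n {ω | ε₁ n i ω = -m₁} = ENNReal.ofReal (1 / (2 * (n : ℝ)))
      ∧ μ n {ω | ε₁ n i ω = 0} = ENNReal.ofReal (1 - 1 / (n : ℝ)))
    (hlaw₂ : ∀ n, 1 ≤ n → ∀ i,
      μ n {ω | ε₂ n i ω = m₂} = ENNReal.ofReal (1 / (2 * (n : ℝ)))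
      ∧ μ n {ω | ε₂ n i ω = -m₂} = ENNReal.ofReal (1 / (2 * (n : ℝ)))
      ∧ μ n {ω | ε₂ n i ω = 0} = ENNReal.ofReal (1 - 1 / (n : ℝ)))
    (P Q : ∀ n : ℕ, Measure (Fin n → ℝ))
    (hP : ∀ n, P n = Measure.map (fun ω i => ε₁ n i ω) (μ n))
    (hQ : ∀ n, Q n = Measure.map (fun ω i => ε₂ n i ω) (μ n)) :
    (∀ n, 1 ≤ n →
      μ n {ω | ∀ i, ε₁ n i ω = 0} = ENNReal.ofReal ((1 - 1 / (n : ℝ)) ^ n))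
    ∧ Tendsto (fun n : ℕ => (1 - 1 / (n : ℝ)) ^ n) atTop (𝓝 (Real.exp (-1)))
    ∧ Filter.limsup (fun n => tvDist (P n) (Q n)) atTop ≤ 1 - Real.exp (-1)
    ∧ 1 - Real.exp (-1) < 1 :=
  all_zero_event_and_tv_bound_general m₁ m₂ Ω mΩ μ hμ ε₁ ε₂ hmeas₁ hmeas₂ hindep₁ hindep₂ hlaw₁
    hlaw₂ P Q hP hQ
end
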